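/- Let M be the smallest subset of ℝ³ containing (−1,1,1) and (1,1,1) that is invariant under the maps a_t(u,v,w) = ((1-t)u−t, (1-t)²v−3t(1-t)u+t(2t−1), (1-t)w+t) and b_t(u,v,w) = ((1-t)u+t, (1-t)v+t, (1-t)²w+3t(1-t)u+t(2t−1)) for all t ∈ [0,1]. Then (0,0,0) ∉ M. -/
import Mathlib


noncomputable def a3 (t : ℝ) (p : ℝ × ℝ × ℝ) : ℝ × ℝ × ℝ :=
  ((1 - t) * p.1 - t, (1 - t)^2 * p.2.1 - 3 * t * (1 - t) * p.1 + t * (2 * t - 1),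
    (1 - t) * p.2.2 + t)

noncomputable def b3 (t : ℝ) (p : ℝ × ℝ × ℝ) : ℝ × ℝ × ℝ :=
  ((1 - t) * p.1 + t, (1 - t) * p.2.1 + t,
    (1 - t)^2 * p.2.2 + 3 * t * (1 - t) * p.1 + t * (2 * t - 1))

/-- The smallest subset of ℝ³ containing (±1,1,1) invariant under all `a3 t`, `b3 t`. -/
noncomputable def M3 : Set (ℝ × ℝ × ℝ) :=
  ⋂₀ {S : Set (ℝ × ℝ × ℝ) | ((-1 : ℝ), (1 : ℝ), (1 : ℝ)) ∈ S ∧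
    ((1 : ℝ), (1 : ℝ), (1 : ℝ)) ∈ S ∧
    ∀ t : ℝ, 0 ≤ t → t ≤ 1 → ∀ p ∈ S, a3 t p ∈ S ∧ b3 t p ∈ S}

/-- Key inequality: if `(6-E)^2 < 8F` then `(6-s²E)^2 < 8(sF+6(1-s))` for `0 < s ≤ 1`. -/
lemma key3 (E F s : ℝ) (hs : 0 < s) (hs1 : s ≤ 1) (h : (6 - E)^2 < 8 * F) :
    (6 - s^2 * E)^2 < 8 * (s * F + 6 * (1 - s)) := by
  have hq : (0:ℝ) < 1 + s + s^2 := by positivity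
  have h1 : 0 ≤ (1 - s) * s * ((1 + s + s^2) * E - 6)^2 :=
    mul_nonneg (mul_nonneg (by linarith) hs.le) (sq_nonneg _)
  have h2 : 0 ≤ 12 * (1 - s)^3 := by nlinarith [sq_nonneg (1 - s)]
  have h3 : 0 < (1 + s + s^2) * s * (8 * F - (6 - E)^2) := by
    apply mul_pos (mul_pos hq hs)
    linarith
  nlinarith [h1, h2, h3, hq, sq_nonneg (1 - s)]

/-- The separating invariant set. -/
def S3 : Set (ℝ × ℝ × ℝ) :=
  {p | (6 - (p.2.2 - 3 * p.1 + 2))^2 < 8 * (p.2.1 + 3 * p.1 + 2) ∨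
       (6 - (p.2.1 + 3 * p.1 + 2))^2 < 8 * (p.2.2 - 3 * p.1 + 2)}

lemma S3_closed : ∀ t : ℝ, 0 ≤ t → t ≤ 1 → ∀ p ∈ S3, a3 t p ∈ S3 ∧ b3 t p ∈ S3 := by
  intro t ht0 ht1 p hp
  obtain ⟨u, v, w⟩ := p
  set s : ℝ := 1 - t with hs_def
  have hs0 : 0 ≤ s := by simp [hs_def]; linarith
  have hs1 : s ≤ 1 := by simp [hs_def]; linarith
  simp only [S3, Set.mem_setOf_eq] at hp
  rcases eq_or_lt_of_le hs0 with hs | hs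
  · -- s = 0, i.e. t = 1 : images have (E,F) = (0,6) resp. (6,0)
    have ht : t = 1 := by simp [hs_def] at hs; linarith
    subst ht
    constructor
    · right
      simp only [a3]
      norm_num
    · left
      simp only [b3]
      norm_num
  · constructor
    · -- a3 : E' = s^2 E, F' = s F + 6 t
      simp only [a3, S3, Set.mem_setOf_eq]
      have hE : ((1 - t)^2 * v - 3 * t * (1 - t) * u + t * (2 * t - 1)) +
          3 * ((1 - t) * u - t) + 2 = s^2 * (v + 3 * u + 2) := by
        simp only [hs_def]; ring
      have hF : ((1 - t) * w + t) - 3 * ((1 - t) * u - t) + 2 =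
          s * (w - 3 * u + 2) + 6 * (1 - s) := by
        simp only [hs_def]; ring
      rcases hp with hG | hH
      · left
        rw [hE, hF]
        have : (6 - (s * (w - 3 * u + 2) + 6 * (1 - s)))^2 =
            s^2 * (6 - (w - 3 * u + 2))^2 := by ring
        rw [this]
        have := mul_lt_mul_of_pos_left hG (show (0:ℝ) < s^2 by positivity)
        linarith [this]
      · right
        rw [hE, hF]
        exact key3 _ _ _ hs hs1 hH
    · -- b3 : E' = s E + 6 t, F' = s^2 F
      simp only [b3, S3, Set.mem_setOf_eq]
      have hE : ((1 - t) * v + t) + 3 * ((1 - t) * u + t) + 2 =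
          s * (v + 3 * u + 2) + 6 * (1 - s) := by
        simp only [hs_def]; ring
      have hF : ((1 - t)^2 * w + 3 * t * (1 - t) * u + t * (2 * t - 1)) -
          3 * ((1 - t) * u + t) + 2 = s^2 * (w - 3 * u + 2) := by
        simp only [hs_def]; ring
      rcases hp with hG | hH
      · left
        rw [hE, hF]
        exact key3 _ _ _ hs hs1 hG
      · right
        rw [hE, hF]
        have : (6 - (s * (v + 3 * u + 2) + 6 * (1 - s)))^2 =
            s^2 * (6 - (v + 3 * u + 2))^2 := by ring
        rw [this]
        have := mul_lt_mul_of_pos_left hH (show (0:ℝ) < s^2 by positivity)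
        linarith [this]

theorem zero_not_mem_M3 : ((0 : ℝ), (0 : ℝ), (0 : ℝ)) ∉ M3 := by
  intro h
  have hS : S3 ∈ {S : Set (ℝ × ℝ × ℝ) | ((-1 : ℝ), (1 : ℝ), (1 : ℝ)) ∈ S ∧
      ((1 : ℝ), (1 : ℝ), (1 : ℝ)) ∈ S ∧
      ∀ t : ℝ, 0 ≤ t → t ≤ 1 → ∀ p ∈ S, a3 t p ∈ S ∧ b3 t p ∈ S} := by
    refine ⟨?_, ?_, S3_closed⟩
    · right; simp only [S3, Set.mem_setOf_eq]; norm_num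
    · left; simp only [S3, Set.mem_setOf_eq]; norm_num
  have h0 := Set.mem_sInter.mp h S3 hS
  simp only [S3, Set.mem_setOf_eq] at h0
  norm_num at h0
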